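/- arXiv:1705.01364 — 2 statements merged into one kernel-verified Lean document; each statement's English description precedes it below -/
import Mathlib

section
/- Let H be an RKHS on Ω with kernel K, X = {x₁,...,x_N} pairwise distinct, and L a linear operator such that u ↦ Lu(z) is bounded for each z ∈ Ω. Then for every z ∈ Ω and u ∈ H, |Lu(z) − ∑_{k=1}^{N} u(x_k) L h_k(z)| ≤ ‖u‖_H · ‖ε_X‖_H, where ε_X = L_y K(·,z) − ∑_{k=1}^{N} K(·,x_k) L h_k(z) and L_y K(·,z) is the Riesz representer of the functional u ↦ Lu(z). -/
open scoped RealInnerProductSpace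

theorem inner_sub_sum_smul_kernel_eq {Ω H ι : Type*} [NormedAddCommGroup H]
    [InnerProductSpace ℝ H] [Fintype ι] (toFun : H →ₗ[ℝ] (Ω → ℝ)) (Kx : Ω → H)
    (hrepro : ∀ (x : Ω) (f : H), ⟪Kx x, f⟫ = toFun f x) (g : H) (x : ι → Ω) (c : ι → ℝ)
    (u : H) :
    ⟪g - ∑ k, c k • Kx (x k), u⟫ = ⟪g, u⟫ - ∑ k, toFun u (x k) * c k := by
  simp only [inner_sub_left, sum_inner, real_inner_smul_left, hrepro, mul_comm]

theorem pointwise_error_estimate_general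
    {Ω H : Type*} [NormedAddCommGroup H] [InnerProductSpace ℝ H]
    (toFun : H →ₗ[ℝ] (Ω → ℝ)) (Kx : Ω → H)
    (hrepro : ∀ (x : Ω) (f : H), ⟪Kx x, f⟫ = toFun f x)
    {N : ℕ} (x : Fin N → Ω)
    (h : Fin N → H)
    (Lz : H →ₗ[ℝ] ℝ) (g : H) (hg : ∀ u : H, Lz u = ⟪g, u⟫)
    (u : H) :
    |Lz u - ∑ k, toFun u (x k) * Lz (h k)| ≤
      ‖u‖ * ‖g - ∑ k, Lz (h k) • Kx (x k)‖ := by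
  calc |Lz u - ∑ k, toFun u (x k) * Lz (h k)|
      = |⟪g - ∑ k, Lz (h k) • Kx (x k), u⟫| := by
        rw [inner_sub_sum_smul_kernel_eq toFun Kx hrepro, hg]
    _ ≤ ‖g - ∑ k, Lz (h k) • Kx (x k)‖ * ‖u‖ := abs_real_inner_le_norm _ _
    _ = _ := mul_comm _ _

/-- pointwise error estimate
|Lu(z) − ∑ u(x_k) Lh_k(z)| ≤ ‖u‖ ‖ε_X‖ with ε_X = g − ∑ Lh_k(z) K(·,x_k). -/
theorem pointwise_error_estimate
    {Ω H : Type*} [NormedAddCommGroup H] [InnerProductSpace ℝ H] [CompleteSpace H]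
    (toFun : H →ₗ[ℝ] (Ω → ℝ)) (K : Ω → Ω → ℝ) (Kx : Ω → H)
    (hK : ∀ x : Ω, toFun (Kx x) = fun y => K y x)
    (hrepro : ∀ (x : Ω) (f : H), ⟪Kx x, f⟫ = toFun f x)
    {N : ℕ} (x : Fin N → Ω) (hx : Function.Injective x)
    (h : Fin N → H)
    (hh : ∀ k, h k ∈ Submodule.span ℝ (Set.range fun j => Kx (x j)))
    (hcard : ∀ k j, toFun (h k) (x j) = if k = j then (1 : ℝ) else 0)
    (Lz : H →ₗ[ℝ] ℝ) (g : H) (hg : ∀ u : H, Lz u = ⟪g, u⟫)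
    (u : H) :
    |Lz u - ∑ k, toFun u (x k) * Lz (h k)| ≤
      ‖u‖ * ‖g - ∑ k, Lz (h k) • Kx (x k)‖ :=
  pointwise_error_estimate_general toFun Kx hrepro x h Lz g hg u
end

section
/- Let the analytic problem Lu = f be well-posed with constant C, i.e., ‖u‖_W ≤ C‖Lu‖_V for all u ∈ U = H, where ‖·‖_V = max_{z∈Ω}|·| (sup norm) on continuous data over compact Ω. If u* ∈ H is the true solution and u₀ ∈ S_X is its interpolant at X = {x₁,...,x_N}, and u*_N minimizes ‖Lu_N − f‖_V over u_N ∈ S_X, then ‖u* − u*_N‖_W ≤ C ‖u*‖_H ‖ε_X‖_H, where ‖ε_X‖_H is the worst-case interpolation error norm from the pointwise error estimate. -/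
/-!
Let `e z = ∑ₖ L hₖ(z) K(·, xₖ)`, so that `‖ε_X‖_H = sup_z ‖g z - e z‖` where `g z` represents
`u ↦ Lu(z)`. Exchanging the two finite sums gives, for every `u`,
`L(Pu)(z) - Lu(z) = ⟪e z - g z, u⟫` with `Pu = ∑ₖ ⟪K(·, xₖ), u⟫ hₖ ∈ S_X`, the kernel
interpolant of `u`.
For `u = u*` Cauchy–Schwarz bounds this residual by `‖u*‖ ‖ε_X‖_H`; minimality of `u*_N` and
well-posedness then give the estimate.

If `z ↦ ‖g z - e z‖` is unbounded, `‖ε_X‖_H` is the junk value `0`. Then the uniform boundedness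
principle yields some `u` whose residual `L(Pu - u)` is unbounded, and well-posedness (with the
junk supremum `0`) forces `‖·‖_W` to vanish identically.
-/

open Set
open scoped RealInnerProductSpace

theorem bddAbove_range_abs_sub {Ω : Type*} {f g : Ω → ℝ}
    (hf : BddAbove (range fun z => |f z|)) (hg : BddAbove (range fun z => |g z|)) :
    BddAbove (range fun z => |f z - g z|) := by
  obtain ⟨a, ha⟩ := hf
  obtain ⟨b, hb⟩ := hg
  refine ⟨a + b, ?_⟩
  rintro _ ⟨z, rfl⟩
  exact (abs_sub _ _).trans (add_le_add (ha ⟨z, rfl⟩) (hb ⟨z, rfl⟩))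

/-- The real supremum of an unbounded family is the junk value `0`. -/
theorem Seminorm.eq_zero_of_le_iSup_of_not_bddAbove {E Ω : Type*} [AddCommGroup E] [Module ℝ E]
    (p : Seminorm ℝ E) (L : E →ₗ[ℝ] (Ω → ℝ)) {C : ℝ} (hp : ∀ u, p u ≤ C * ⨆ z, |L u z|)
    {w : E} (hw : ¬BddAbove (range fun z => |L w z|)) (v : E) : p v = 0 := by
  have hzero : ∀ u, ¬BddAbove (range fun z => |L u z|) → p u ≤ 0 := fun u hu => by
    simpa [Real.iSup_of_not_bddAbove hu] using hp u
  refine le_antisymm ?_ (apply_nonneg p v)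
  by_cases hv : BddAbove (range fun z => |L v z|)
  · have hvw : ¬BddAbove (range fun z => |L (v + w) z|) := fun hvw => hw <| by
      simpa using bddAbove_range_abs_sub hvw hv
    calc p v = p ((v + w) - w) := by rw [add_sub_cancel_right]
      _ ≤ p (v + w) + p w := map_sub_le_add p _ _
      _ ≤ 0 := by linarith [hzero _ hvw, hzero _ hw]
  · exact hzero v hv

theorem exists_not_bddAbove_inner_of_not_bddAbove_norm {Ω H : Type*} [NormedAddCommGroup H]
    [InnerProductSpace ℝ H] [CompleteSpace H] {y : Ω → H}
    (hy : ¬BddAbove (range fun z => ‖y z‖)) :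
    ∃ w : H, ¬BddAbove (range fun z => |⟪y z, w⟫|) := by
  by_contra! hbdd
  obtain ⟨C, hC⟩ := banach_steinhaus (g := fun z => innerSL ℝ (y z)) fun w => by
    obtain ⟨B, hB⟩ := hbdd w
    exact ⟨B, fun z => by simpa using hB ⟨z, rfl⟩⟩
  exact hy ⟨C, by rintro _ ⟨z, rfl⟩; simpa using hC z⟩

theorem inner_sum_inner_smul {ι H : Type*} [NormedAddCommGroup H] [InnerProductSpace ℝ H]
    (s : Finset ι) (a b : ι → H) (y w : H) :
    ⟪∑ k ∈ s, ⟪y, a k⟫ • b k, w⟫ = ⟪y, ∑ k ∈ s, ⟪b k, w⟫ • a k⟫ := by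
  simp only [sum_inner, inner_sum, real_inner_smul_left, real_inner_smul_right, mul_comm]

section Residual

variable {Ω H : Type*} [NormedAddCommGroup H] [InnerProductSpace ℝ H] {ι : Type*} [Fintype ι]
  (L : H →ₗ[ℝ] (Ω → ℝ)) (g : Ω → H) (hg : ∀ z u, L u z = ⟪g z, u⟫) (a b : ι → H)
include hg

theorem apply_sum_inner_smul_sub_apply (w : H) (z : Ω) :
    L (∑ k, ⟪b k, w⟫ • a k) z - L w z = ⟪∑ k, L (a k) z • b k - g z, w⟫ := by
  simp only [hg, inner_sub_left, inner_sum_inner_smul]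

theorem abs_apply_sum_inner_smul_sub_apply_le (w : H) (z : Ω) :
    |L (∑ k, ⟪b k, w⟫ • a k) z - L w z| ≤ ‖w‖ * ‖g z - ∑ k, L (a k) z • b k‖ := by
  rw [apply_sum_inner_smul_sub_apply L g hg, ← norm_sub_rev, mul_comm]
  exact abs_real_inner_le_norm _ _

end Residual

theorem wellposed_error_bound_general
    {Ω H : Type*} [NormedAddCommGroup H] [InnerProductSpace ℝ H]
    [CompleteSpace H]
    (Kx : Ω → H)
    {N : ℕ} (x : Fin N → Ω)
    (h : Fin N → H)
    (hh : ∀ k, h k ∈ Submodule.span ℝ (Set.range fun j => Kx (x j)))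
    (L : H →ₗ[ℝ] (Ω → ℝ)) (g : Ω → H)
    (hg : ∀ (z : Ω) (u : H), L u z = ⟪g z, u⟫)
    (nW : Seminorm ℝ H) (C : ℝ) (hC : 0 ≤ C)
    (hwp : ∀ u : H, nW u ≤ C * ⨆ z, |L u z|)
    (ustar uN : H)
    (hmin : ∀ s ∈ Submodule.span ℝ (Set.range fun k => Kx (x k)),
      (⨆ z, |L uN z - L ustar z|) ≤ ⨆ z, |L s z - L ustar z|)
    (εX : ℝ) (hε : εX = ⨆ z, ‖g z - ∑ k, L (h k) z • Kx (x k)‖) :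
    nW (ustar - uN) ≤ C * ‖ustar‖ * εX := by
  set P : H → H := fun w => ∑ k, ⟪Kx (x k), w⟫ • h k
  have hresid := abs_apply_sum_inner_smul_sub_apply_le L g hg h (fun k => Kx (x k))
  by_cases hb : BddAbove (range fun z => ‖g z - ∑ k, L (h k) z • Kx (x k)‖)
  · have hPS : P ustar ∈ Submodule.span ℝ (range fun k => Kx (x k)) :=
      Submodule.sum_mem _ fun k _ => Submodule.smul_mem _ _ (hh k)
    have hεX : 0 ≤ ‖ustar‖ * εX :=
      mul_nonneg (norm_nonneg _) (hε ▸ Real.iSup_nonneg fun _ => norm_nonneg _)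
    have hPres : (⨆ z, |L (P ustar) z - L ustar z|) ≤ ‖ustar‖ * εX :=
      Real.iSup_le (fun z => (hresid ustar z).trans <|
        mul_le_mul_of_nonneg_left (hε ▸ le_ciSup hb z) (norm_nonneg _)) hεX
    calc nW (ustar - uN) ≤ C * ⨆ z, |L uN z - L ustar z| := by
          simpa only [map_sub, Pi.sub_apply, abs_sub_comm] using hwp (ustar - uN)
      _ ≤ C * (‖ustar‖ * εX) :=
          mul_le_mul_of_nonneg_left ((hmin _ hPS).trans hPres) hC
      _ = C * ‖ustar‖ * εX := (mul_assoc _ _ _).symm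
  · obtain ⟨w, hw⟩ := exists_not_bddAbove_inner_of_not_bddAbove_norm hb
    have hPw : ¬BddAbove (range fun z => |L (P w - w) z|) := by
      convert hw using 4 with z
      rw [map_sub, Pi.sub_apply, apply_sum_inner_smul_sub_apply L g hg, ← abs_neg,
        ← inner_neg_left, neg_sub]
    rw [nW.eq_zero_of_le_iSup_of_not_bddAbove L hwp hPw, hε, Real.iSup_of_not_bddAbove hb,
      mul_zero]

/-- for a well-posed problem Lu = f, the residual-minimizing approximation
u*_N ∈ S_X satisfies ‖u* − u*_N‖_W ≤ C ‖u*‖_H ‖ε_X‖_H. -/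
theorem wellposed_error_bound
    {Ω H : Type*} [Nonempty Ω] [NormedAddCommGroup H] [InnerProductSpace ℝ H]
    [CompleteSpace H]
    (toFun : H →ₗ[ℝ] (Ω → ℝ)) (K : Ω → Ω → ℝ) (Kx : Ω → H)
    (hK : ∀ x : Ω, toFun (Kx x) = fun y => K y x)
    (hrepro : ∀ (x : Ω) (f : H), ⟪Kx x, f⟫ = toFun f x)
    {N : ℕ} (x : Fin N → Ω) (hx : Function.Injective x)
    (h : Fin N → H)
    (hh : ∀ k, h k ∈ Submodule.span ℝ (Set.range fun j => Kx (x j)))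
    (hcard : ∀ k j, toFun (h k) (x j) = if k = j then (1 : ℝ) else 0)
    (L : H →ₗ[ℝ] (Ω → ℝ)) (g : Ω → H)
    (hg : ∀ (z : Ω) (u : H), L u z = ⟪g z, u⟫)
    (nW : Seminorm ℝ H) (C : ℝ) (hC : 0 ≤ C)
    (hwp : ∀ u : H, nW u ≤ C * ⨆ z, |L u z|)
    (ustar uN : H)
    (huN : uN ∈ Submodule.span ℝ (Set.range fun k => Kx (x k)))
    (hmin : ∀ s ∈ Submodule.span ℝ (Set.range fun k => Kx (x k)),
      (⨆ z, |L uN z - L ustar z|) ≤ ⨆ z, |L s z - L ustar z|)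
    (εX : ℝ) (hε : εX = ⨆ z, ‖g z - ∑ k, L (h k) z • Kx (x k)‖) :
    nW (ustar - uN) ≤ C * ‖ustar‖ * εX :=
  wellposed_error_bound_general Kx x h hh L g hg nW C hC hwp ustar uN hmin εX hε
end
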